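/- Let X and Y be finite random variables with joint distribution P_XY, where P_X(x) > 0 for all x and P_Y(y) > 0 for all y. Then for all δ ∈ (0,1), the PML envelope satisfies ε_c(δ) ≤ 𝓛(X → Y) + log(1/δ), where 𝓛(X → Y) = log Σ_{y ∈ 𝒴} max_{x ∈ 𝒳} P_{Y|X=x}(y) is the maximal leakage (log of the multiplicative Bayes capacity). -/

import Mathlib

open Real Finset
open scoped Classical

noncomputable section

/-- Marginal distribution of the first coordinate of a joint distribution. -/
def margX {X Y : Type} [Fintype Y] (P : X → Y → ℝ) (x : X) : ℝ := ∑ y, P x y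

/-- Marginal distribution of the second coordinate of a joint distribution. -/
def margY {X Y : Type} [Fintype X] (P : X → Y → ℝ) (y : Y) : ℝ := ∑ x, P x y

/-- `P` is a joint probability distribution on `X × Y`. -/
def IsJoint {X Y : Type} [Fintype X] [Fintype Y] (P : X → Y → ℝ) : Prop :=
  (∀ x y, 0 ≤ P x y) ∧ (∑ x, ∑ y, P x y) = 1

/-- Conditional probability `P_{Y|X=x}(y)` of the second coordinate given the first. -/
def condYX {X Y : Type} [Fintype Y] (P : X → Y → ℝ) (x : X) (y : Y) : ℝ :=
  P x y / margX P x

/-- Pointwise maximal leakage of the outcome `y`: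
`ℓ(X → y) = log (max_x P_{Y|X=x}(y) / P_Y(y))`. -/
def pml {X Y : Type} [Fintype X] [Fintype Y] (P : X → Y → ℝ) (y : Y) : ℝ :=
  Real.log ((⨆ x, condYX P x y) / margY P y)

/-- `K` is a Markov kernel (a conditional distribution). -/
def IsKernel {Y Z : Type} [Fintype Z] (K : Y → Z → ℝ) : Prop :=
  (∀ y z, 0 ≤ K y z) ∧ ∀ y, (∑ z, K y z) = 1

/-- Joint distribution of `(X, Z)` obtained by post-processing `Y` with the kernel `K`
(marginalizing out `Y`); this encodes the Markov chain `X - Y - Z`. -/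
def pushKernel {X Y Z : Type} [Fintype Y] (P : X → Y → ℝ) (K : Y → Z → ℝ)
    (x : X) (z : Z) : ℝ :=
  ∑ y, P x y * K y z

/-- Left-continuous quantile of the leakage random variable:
`ubar ε_Z(δ) = inf {t ≥ 0 : ℙ(ℓ(Z) ≤ t) ≥ 1 - δ}`. -/
def ubarEps {X Z : Type} [Fintype X] [Fintype Z] (Q : X → Z → ℝ) (δ : ℝ) : ℝ :=
  sInf {t : ℝ | 0 ≤ t ∧
    1 - δ ≤ ∑ z ∈ Finset.univ.filter (fun z => pml Q z ≤ t), margY Q z}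

/-- The PML envelope: the supremum of the left-continuous leakage quantile over all
finite post-processings `Z` of `Y` (i.e., over all Markov chains `X - Y - Z`). -/
def pmlEnvelope {X Y : Type} [Fintype X] [Fintype Y] (P : X → Y → ℝ) (δ : ℝ) : ℝ :=
  sSup {e : ℝ | ∃ (n : ℕ) (K : Y → Fin n → ℝ),
    IsKernel K ∧ e = ubarEps (pushKernel P K) δ}

/-! Post-processing `Y` by a kernel cannot increase the multiplicative Bayes capacity
`∑_z max_x P_{Z|X=x}(z)`. Since `P_Z(z) e^{ℓ(X → z)} = max_x P_{Z|X=x}(z)`, Markov's inequality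
bounds `P(ℓ(X → Z) > t)` by `e^{-t}` times that capacity, hence by `δ` once
`t = 𝓛(X → Y) + log (1/δ)`. -/

theorem IsJoint.nonempty_left {X Y : Type} [Fintype X] [Fintype Y] {P : X → Y → ℝ}
    (hP : IsJoint P) : Nonempty X := by
  by_contra hX
  simpa [not_nonempty_iff.mp hX] using hP.2

theorem sum_condYX_eq_one {X Y : Type} [Fintype Y] {P : X → Y → ℝ} {x : X}
    (hx : margX P x ≠ 0) : ∑ y, condYX P x y = 1 := by
  simp only [condYX, ← Finset.sum_div]
  exact div_self hx

theorem one_le_sum_iSup_condYX {X Y : Type} [Finite X] [Fintype Y] {P : X → Y → ℝ} {x : X}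
    (hx : margX P x ≠ 0) : 1 ≤ ∑ y, ⨆ x, condYX P x y :=
  calc 1 = ∑ y, condYX P x y := (sum_condYX_eq_one hx).symm
    _ ≤ ∑ y, ⨆ x, condYX P x y :=
      Finset.sum_le_sum fun y _ => le_ciSup (Finite.bddAbove_range fun x => condYX P x y) x

section pushKernel

variable {X Y Z : Type} [Fintype Y] [Fintype Z] {P : X → Y → ℝ} {K : Y → Z → ℝ}

theorem pushKernel_nonneg (hP : ∀ x y, 0 ≤ P x y) (hK : IsKernel K) (x : X) (z : Z) :
    0 ≤ pushKernel P K x z :=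
  Finset.sum_nonneg fun y _ => mul_nonneg (hP x y) (hK.1 y z)

theorem sum_mul_kernel_sum (hK : IsKernel K) (a : Y → ℝ) :
    ∑ z, ∑ y, a y * K y z = ∑ y, a y := by
  rw [Finset.sum_comm]
  simp only [← Finset.mul_sum, hK.2, mul_one]

theorem margX_pushKernel (hK : IsKernel K) (x : X) : margX (pushKernel P K) x = margX P x :=
  sum_mul_kernel_sum hK (P x)

theorem sum_margY_pushKernel [Fintype X] (hK : IsKernel K) :
    ∑ z, margY (pushKernel P K) z = ∑ x, ∑ y, P x y := by
  simp only [margY]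
  rw [Finset.sum_comm]
  exact Finset.sum_congr rfl fun x _ => margX_pushKernel hK x

theorem condYX_pushKernel (hK : IsKernel K) (x : X) (z : Z) :
    condYX (pushKernel P K) x z = ∑ y, condYX P x y * K y z := by
  simp only [condYX, margX_pushKernel hK, pushKernel, Finset.sum_div, div_mul_eq_mul_div]

theorem sum_iSup_mul_kernel_le [Finite X] [Nonempty X] (hK : IsKernel K) (c : X → Y → ℝ) :
    ∑ z, ⨆ x, ∑ y, c x y * K y z ≤ ∑ y, ⨆ x, c x y :=
  calc ∑ z, ⨆ x, ∑ y, c x y * K y z ≤ ∑ z, ∑ y, (⨆ x, c x y) * K y z :=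
        Finset.sum_le_sum fun z _ => ciSup_le fun x => Finset.sum_le_sum fun y _ =>
          mul_le_mul_of_nonneg_right (le_ciSup (Finite.bddAbove_range fun x => c x y) x) (hK.1 y z)
    _ = ∑ y, ⨆ x, c x y := sum_mul_kernel_sum hK _

theorem sum_iSup_condYX_pushKernel_le [Fintype X] [Nonempty X] (hK : IsKernel K) :
    ∑ z, ⨆ x, condYX (pushKernel P K) x z ≤ ∑ y, ⨆ x, condYX P x y := by
  simp only [condYX_pushKernel hK]
  exact sum_iSup_mul_kernel_le hK _

end pushKernel

theorem mul_exp_le_of_lt_log_div {s m t : ℝ} (hs : 0 ≤ s) (hm : 0 ≤ m) (ht : 0 ≤ t)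
    (h : t < Real.log (s / m)) : m * Real.exp t ≤ s := by
  have hsm : 1 < s / m := (Real.log_pos_iff (div_nonneg hs hm)).mp (ht.trans_lt h)
  have hm' : 0 < m := hm.lt_of_ne fun h0 => by rw [← h0, div_zero] at hsm; linarith
  rw [Real.lt_log_iff_exp_lt (by linarith), lt_div_iff₀ hm'] at h
  linarith

section quantile

variable {X Z : Type} [Fintype X] [Fintype Z] {Q : X → Z → ℝ}

theorem sum_margY_pml_gt_mul_exp_le (hQ : ∀ x z, 0 ≤ Q x z) {t : ℝ} (ht : 0 ≤ t) :
    (∑ z ∈ univ.filter (fun z => ¬ pml Q z ≤ t), margY Q z) * Real.exp t ≤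
      ∑ z, ⨆ x, condYX Q x z := by
  have hmargY : ∀ z, 0 ≤ margY Q z := fun z => Finset.sum_nonneg fun x _ => hQ x z
  have hsup : ∀ z, 0 ≤ ⨆ x, condYX Q x z := fun z =>
    Real.iSup_nonneg fun x => div_nonneg (hQ x z) (Finset.sum_nonneg fun z _ => hQ x z)
  rw [Finset.sum_mul]
  calc ∑ z ∈ univ.filter (fun z => ¬ pml Q z ≤ t), margY Q z * Real.exp t
      ≤ ∑ z ∈ univ.filter (fun z => ¬ pml Q z ≤ t), ⨆ x, condYX Q x z :=
        Finset.sum_le_sum fun z hz =>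
          mul_exp_le_of_lt_log_div (hsup z) (hmargY z) ht (not_le.mp (Finset.mem_filter.mp hz).2)
    _ ≤ ∑ z, ⨆ x, condYX Q x z :=
        Finset.sum_le_sum_of_subset_of_nonneg (Finset.subset_univ _) fun z _ _ => hsup z

theorem ubarEps_le_of_sum_iSup_le (hQ : ∀ x z, 0 ≤ Q x z) (hmass : ∑ z, margY Q z = 1)
    {δ t : ℝ} (ht : 0 ≤ t) (hcap : ∑ z, ⨆ x, condYX Q x z ≤ δ * Real.exp t) :
    ubarEps Q δ ≤ t := by
  have htail : ∑ z ∈ univ.filter (fun z => ¬ pml Q z ≤ t), margY Q z ≤ δ :=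
    le_of_mul_le_mul_right ((sum_margY_pml_gt_mul_exp_le hQ ht).trans hcap) (Real.exp_pos t)
  have hsplit := Finset.sum_filter_add_sum_filter_not univ (fun z => pml Q z ≤ t) (margY Q)
  refine csInf_le ⟨0, fun _ h => h.1⟩ ⟨ht, ?_⟩
  linarith

end quantile

theorem pmlEnvelope_le_maximal_leakage_general
    {X Y : Type} [Fintype X] [Fintype Y]
    (P : X → Y → ℝ) (hP : IsJoint P)
    (hPX : ∀ x, 0 < margX P x)
    (δ : ℝ) (hδ : δ ∈ Set.Ioo (0 : ℝ) 1) :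
    pmlEnvelope P δ ≤ Real.log (∑ y, ⨆ x, condYX P x y) + Real.log (1 / δ) := by
  obtain ⟨hδ0, hδ1⟩ := hδ
  have := hP.nonempty_left
  set S := ∑ y, ⨆ x, condYX P x y
  have hS : 1 ≤ S := one_le_sum_iSup_condYX (hPX (Classical.arbitrary X)).ne'
  have ht : 0 ≤ Real.log S + Real.log (1 / δ) :=
    add_nonneg (Real.log_nonneg hS) (Real.log_nonneg (by rw [le_div_iff₀ hδ0]; linarith))
  have hexp : δ * Real.exp (Real.log S + Real.log (1 / δ)) = S := by
    rw [Real.exp_add, Real.exp_log (by linarith), Real.exp_log (by positivity)]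
    field_simp
  refine Real.sSup_le ?_ ht
  rintro _ ⟨n, K, hK, rfl⟩
  refine ubarEps_le_of_sum_iSup_le (pushKernel_nonneg hP.1 hK) ?_ ht ?_
  · rw [sum_margY_pushKernel hK, hP.2]
  · rw [hexp]
    exact sum_iSup_condYX_pushKernel_le hK

/-- For all `δ ∈ (0,1)`, the PML envelope satisfies
`ε_c(δ) ≤ 𝓛(X → Y) + log (1/δ)`, where
`𝓛(X → Y) = log ∑_y max_x P_{Y|X=x}(y)` is the maximal leakage. -/
theorem pmlEnvelope_le_maximal_leakage
    {X Y : Type} [Fintype X] [Fintype Y]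
    (P : X → Y → ℝ) (hP : IsJoint P)
    (hPX : ∀ x, 0 < margX P x) (hPY : ∀ y, 0 < margY P y)
    (δ : ℝ) (hδ : δ ∈ Set.Ioo (0 : ℝ) 1) :
    pmlEnvelope P δ ≤ Real.log (∑ y, ⨆ x, condYX P x y) + Real.log (1 / δ) :=
  pmlEnvelope_le_maximal_leakage_general P hP hPX δ hδ
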